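/- Let r ≥ 2. Then for all j, q, t ∈ {1, …, r}: E[((r²−1) − 12ρ(j)²)² ρ(j)⁴] ≤ 3r⁸/140; E[((r²−1) − 12ρ(j)²)² ρ(q)⁴] ≤ 0.02440 r⁸; E[((r²−1) − 12ρ(j)²)² ρ(j)² ρ(q)²] ≤ 0.02292 r⁸; and E[((r²−1) − 12ρ(j)²)² ρ(q)⁴ ρ(t)⁴] ≤ 0.00111 r¹². -/

import Mathlib

open MeasureTheory Finset Real

noncomputable section

instance instMSPerm (r : ℕ) : MeasurableSpace (Equiv.Perm (Fin r)) := ⊤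

/-- The law of a single uniformly random permutation of `{1, …, r}`. -/
def permMeasure (r : ℕ) : Measure (Equiv.Perm (Fin r)) :=
  (PMF.uniformOfFintype (Equiv.Perm (Fin r))).toMeasure

/-- `ρ(j) = π(j) - (r+1)/2`, where `π(j) ∈ {1, …, r}` (a permutation of `Fin r` assigns
values in `{0, …, r-1}`, hence the `+ 1`). -/
def rho1 (r : ℕ) (j : Fin r) (g : Equiv.Perm (Fin r)) : ℝ :=
  ((g j : ℕ) : ℝ) + 1 - ((r : ℝ) + 1) / 2

end

/-!
Write `w(x) = (r² − 1) − 12x²` (the `weight` of the names below) and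
`c_i = centered r i = i + 1 − (r + 1)/2`, so that `ρ(j) = c_{π(j)}`. Since `π` is uniform,
`ρ(j)` is uniformly distributed on the `c_i`, and for `j ≠ q` the pair `(ρ(j), ρ(q))` is
uniformly distributed on the pairs of distinct values: reindexing the sum over all permutations
by one that moves an index (a pair of distinct indices) to another shows that these sums do not
depend on the indices. Hence every expectation is a combination of the power sums `∑ c_i^k`,
`k ≤ 12`, which are polynomials in `r` by the recurrence `r ↦ r + 2`; for distinct indices,
adding back the diagonal bounds the expectation by a product of such sums. In the fourth bound
with `j ≠ q` the factor `ρ(t)⁴` is simply bounded by `((r − 1)/2)⁴`.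
-/

namespace Equiv.Perm

variable {α : Type*} [Fintype α] [DecidableEq α]

theorem card_mul_sum_comp_apply (a : α) (F : α → ℝ) :
    Fintype.card α * ∑ g : Perm α, F (g a) = Fintype.card (Perm α) * ∑ i, F i := by
  have invariant : ∀ b, ∑ g : Perm α, F (g b) = ∑ g : Perm α, F (g a) := fun b =>
    Fintype.sum_equiv (Equiv.mulRight (swap b a)) _ _ fun g => by simp
  calc Fintype.card α * ∑ g : Perm α, F (g a)
      = ∑ b, ∑ g : Perm α, F (g b) := by simp [invariant]
    _ = ∑ g : Perm α, ∑ i, F (g i) := Finset.sum_comm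
    _ = Fintype.card (Perm α) * ∑ i, F i := by
      simp [fun g : Perm α => Fintype.sum_equiv g (fun i => F (g i)) F fun _ => rfl]

theorem card_offDiag_mul_sum_comp_apply_apply {a b : α} (hab : a ≠ b) (Φ : α → α → ℝ) :
    #(univ : Finset α).offDiag * ∑ g : Perm α, Φ (g a) (g b)
      = Fintype.card (Perm α) * ∑ p ∈ (univ : Finset α).offDiag, Φ p.1 p.2 := by
  have invariant : ∀ p ∈ (univ : Finset α).offDiag,
      ∑ g : Perm α, Φ (g p.1) (g p.2) = ∑ g : Perm α, Φ (g a) (g b) := by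
    rintro ⟨a', b'⟩ hp
    obtain ⟨σ, hσ⟩ := exists_extending_pair ![a, b] ![a', b']
      (by simp [Function.Injective, Fin.forall_fin_two, hab, hab.symm])
      (by simp [Function.Injective, Fin.forall_fin_two, (mem_offDiag.1 hp).2.2,
        (mem_offDiag.1 hp).2.2.symm])
    refine Fintype.sum_equiv (Equiv.mulRight σ) _ _ fun g => ?_
    simpa using (congrArg₂ (fun x y => Φ (g x) (g y)) (hσ 0) (hσ 1)).symm
  calc #(univ : Finset α).offDiag * ∑ g : Perm α, Φ (g a) (g b)
      = ∑ p ∈ (univ : Finset α).offDiag, ∑ g : Perm α, Φ (g p.1) (g p.2) := by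
        rw [Finset.sum_congr rfl invariant, sum_const, nsmul_eq_mul]
    _ = ∑ g : Perm α, ∑ p ∈ (univ : Finset α).offDiag, Φ (g p.1) (g p.2) := Finset.sum_comm
    _ = Fintype.card (Perm α) * ∑ p ∈ (univ : Finset α).offDiag, Φ p.1 p.2 := by
      simp [fun g : Perm α => Finset.sum_equiv (g.prodCongr g) (s := (univ : Finset α).offDiag)
        (t := (univ : Finset α).offDiag) (f := fun p => Φ (g p.1) (g p.2))
        (g := fun p => Φ p.1 p.2) (by simp) (fun _ _ => rfl)]

end Equiv.Perm

theorem Fin.one_lt_of_ne {r : ℕ} {j q : Fin r} (hjq : j ≠ q) : 1 < r := by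
  simpa using Fintype.one_lt_card_iff.2 ⟨j, q, hjq⟩

noncomputable def centered (r : ℕ) (i : Fin r) : ℝ := (i : ℕ) + 1 - ((r : ℝ) + 1) / 2

theorem centered_pow_four_le {r : ℕ} (i : Fin r) :
    centered r i ^ 4 ≤ (((r : ℝ) - 1) / 2) ^ 4 := by
  have hi : ((i : ℕ) : ℝ) + 1 ≤ r := by exact_mod_cast i.isLt
  have : |centered r i| ≤ ((r : ℝ) - 1) / 2 := by
    rw [abs_le, centered]; constructor <;> linarith [Nat.cast_nonneg (α := ℝ) (i : ℕ)]
  simpa [Even.pow_abs (by decide : Even 4)] using pow_le_pow_left₀ (abs_nonneg _) this 4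

noncomputable def powerSum (r k : ℕ) : ℝ := ∑ i : Fin r, centered r i ^ k

theorem powerSum_zero (r : ℕ) : powerSum r 0 = r := by simp [powerSum]

theorem powerSum_add_two (n k : ℕ) :
    powerSum (n + 2) k
      = powerSum n k + (((n : ℝ) + 1) / 2) ^ k + (-(((n : ℝ) + 1) / 2)) ^ k := by
  simp only [powerSum, Fin.sum_univ_succ (n := n + 1), Fin.sum_univ_castSucc, centered,
    Fin.val_succ, Fin.val_castSucc, Fin.val_zero, Fin.val_last]
  push_cast
  ring_nf

theorem powerSum_eq_of_recurrence {k : ℕ} (hk : k ≠ 0) (p : ℝ → ℝ) (h0 : p 0 = 0)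
    (h1 : p 1 = 0) (hstep : ∀ x, p (x + 2) = p x + ((x + 1) / 2) ^ k + (-((x + 1) / 2)) ^ k)
    (r : ℕ) : powerSum r k = p r := by
  induction r using Nat.twoStepInduction with
  | zero => simp [powerSum, h0]
  | one => simp [powerSum, centered, h1, hk]
  | more n ih _ => rw [powerSum_add_two, ih]; push_cast; rw [hstep]

theorem powerSum_two (r : ℕ) : powerSum r 2 = ((r : ℝ) ^ 3 - r) / 12 :=
  powerSum_eq_of_recurrence two_ne_zero (fun x => (x ^ 3 - x) / 12) (by norm_num) (by norm_num)
    (fun x => by ring) r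

theorem powerSum_four (r : ℕ) : powerSum r 4 = (3 * (r : ℝ) ^ 5 - 10 * r ^ 3 + 7 * r) / 240 :=
  powerSum_eq_of_recurrence four_ne_zero (fun x => (3 * x ^ 5 - 10 * x ^ 3 + 7 * x) / 240)
    (by norm_num) (by norm_num) (fun x => by ring) r

theorem powerSum_six (r : ℕ) :
    powerSum r 6 = (3 * (r : ℝ) ^ 7 - 21 * r ^ 5 + 49 * r ^ 3 - 31 * r) / 1344 :=
  powerSum_eq_of_recurrence (by norm_num)
    (fun x => (3 * x ^ 7 - 21 * x ^ 5 + 49 * x ^ 3 - 31 * x) / 1344)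
    (by norm_num) (by norm_num) (fun x => by ring) r

theorem powerSum_eight (r : ℕ) :
    powerSum r 8 = (5 * (r : ℝ) ^ 9 - 60 * r ^ 7 + 294 * r ^ 5 - 620 * r ^ 3 + 381 * r) / 11520 :=
  powerSum_eq_of_recurrence (by norm_num)
    (fun x => (5 * x ^ 9 - 60 * x ^ 7 + 294 * x ^ 5 - 620 * x ^ 3 + 381 * x) / 11520)
    (by norm_num) (by norm_num) (fun x => by ring) r

theorem powerSum_ten (r : ℕ) :
    powerSum r 10 = (3 * (r : ℝ) ^ 11 - 55 * r ^ 9 + 462 * r ^ 7 - 2046 * r ^ 5 + 4191 * r ^ 3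
      - 2555 * r) / 33792 :=
  powerSum_eq_of_recurrence (by norm_num)
    (fun x => (3 * x ^ 11 - 55 * x ^ 9 + 462 * x ^ 7 - 2046 * x ^ 5 + 4191 * x ^ 3
      - 2555 * x) / 33792)
    (by norm_num) (by norm_num) (fun x => by ring) r

theorem powerSum_twelve (r : ℕ) :
    powerSum r 12 = (105 * (r : ℝ) ^ 13 - 2730 * r ^ 11 + 35035 * r ^ 9 - 265980 * r ^ 7
      + 1144143 * r ^ 5 - 2325050 * r ^ 3 + 1414477 * r) / 5591040 :=
  powerSum_eq_of_recurrence (by norm_num)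
    (fun x => (105 * x ^ 13 - 2730 * x ^ 11 + 35035 * x ^ 9 - 265980 * x ^ 7
      + 1144143 * x ^ 5 - 2325050 * x ^ 3 + 1414477 * x) / 5591040)
    (by norm_num) (by norm_num) (fun x => by ring) r

theorem sum_weight_sq_mul_pow (r k : ℕ) :
    ∑ i : Fin r, (((r : ℝ) ^ 2 - 1) - 12 * centered r i ^ 2) ^ 2 * centered r i ^ k
      = ((r : ℝ) ^ 2 - 1) ^ 2 * powerSum r k - 24 * ((r : ℝ) ^ 2 - 1) * powerSum r (k + 2)
        + 144 * powerSum r (k + 4) := by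
  simp only [powerSum, mul_sum, ← sum_sub_distrib, ← sum_add_distrib]
  exact sum_congr rfl fun i _ => by ring

theorem sum_weight_sq (r : ℕ) :
    ∑ i : Fin r, (((r : ℝ) ^ 2 - 1) - 12 * centered r i ^ 2) ^ 2
      = 4 * r * ((r : ℝ) ^ 2 - 1) * (r ^ 2 - 4) / 5 := by
  have h := sum_weight_sq_mul_pow r 0
  simp only [pow_zero, mul_one] at h
  rw [h, powerSum_zero, powerSum_two, powerSum_four]
  ring

theorem sum_weight_sq_mul_sq (r : ℕ) :
    ∑ i : Fin r, (((r : ℝ) ^ 2 - 1) - 12 * centered r i ^ 2) ^ 2 * centered r i ^ 2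
      = r * ((r : ℝ) ^ 2 - 1) * (r ^ 2 - 4) * (11 * r ^ 2 - 71) / 105 := by
  rw [sum_weight_sq_mul_pow, powerSum_two, powerSum_four, powerSum_six]; ring

theorem sum_weight_sq_mul_pow_four (r : ℕ) :
    ∑ i : Fin r, (((r : ℝ) ^ 2 - 1) - 12 * centered r i ^ 2) ^ 2 * centered r i ^ 4
      = r * ((r : ℝ) ^ 2 - 1) * (r ^ 2 - 4) * (9 * r ^ 4 - 118 * r ^ 2 + 445) / 420 := by
  rw [sum_weight_sq_mul_pow, powerSum_four, powerSum_six, powerSum_eight]; ring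

theorem sum_weight_sq_mul_pow_eight (r : ℕ) :
    ∑ i : Fin r, (((r : ℝ) ^ 2 - 1) - 12 * centered r i ^ 2) ^ 2 * centered r i ^ 8
      = r * ((r : ℝ) ^ 2 - 1) * (r ^ 2 - 4) * (2905 * r ^ 8 - 86940 * r ^ 6 + 1201326 * r ^ 4
        - 8576812 * r ^ 2 + 24972225) / 2882880 := by
  rw [sum_weight_sq_mul_pow, powerSum_eight, powerSum_ten, powerSum_twelve]; ring

section Integrals

variable {r : ℕ}

instance : IsProbabilityMeasure (permMeasure r) := by
  unfold permMeasure; infer_instance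

instance : MeasurableSingletonClass (Equiv.Perm (Fin r)) := ⟨fun _ => trivial⟩

theorem integral_permMeasure (f : Equiv.Perm (Fin r) → ℝ) :
    ∫ g, f g ∂permMeasure r = (∑ g, f g) / r.factorial := by
  rw [permMeasure, PMF.integral_eq_sum, Finset.sum_div]
  simp [div_eq_inv_mul, Fintype.card_perm]

theorem integral_comp_apply (j : Fin r) (F : Fin r → ℝ) :
    ∫ g, F (g j) ∂permMeasure r = (∑ i, F i) / r := by
  have hr : (r : ℝ) ≠ 0 := by exact_mod_cast j.pos.ne'
  rw [integral_permMeasure, div_eq_div_iff (by positivity) hr]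
  have key := Equiv.Perm.card_mul_sum_comp_apply j F
  rw [Fintype.card_perm, Fintype.card_fin] at key
  linear_combination key

theorem integral_comp_apply_apply {j q : Fin r} (hjq : j ≠ q) (Φ : Fin r → Fin r → ℝ) :
    ∫ g, Φ (g j) (g q) ∂permMeasure r
      = (∑ p ∈ (univ : Finset (Fin r)).offDiag, Φ p.1 p.2) / (r * (r - 1)) := by
  have hr : (1 : ℝ) < r := by exact_mod_cast Fin.one_lt_of_ne hjq
  have key := Equiv.Perm.card_offDiag_mul_sum_comp_apply_apply hjq Φ
  rw [offDiag_card, card_univ, Fintype.card_perm, Fintype.card_fin,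
    Nat.cast_sub (Nat.le_mul_self r)] at key
  rw [integral_permMeasure, div_eq_div_iff (by positivity) (by nlinarith)]
  push_cast at key
  linear_combination key

theorem integral_mul_comp_apply_le {j q : Fin r} (hjq : j ≠ q) {F H : Fin r → ℝ}
    (hF : 0 ≤ F) (hH : 0 ≤ H) :
    ∫ g, F (g j) * H (g q) ∂permMeasure r ≤ (∑ i, F i) * (∑ i, H i) / (r * (r - 1)) := by
  have hr : (1 : ℝ) < r := by exact_mod_cast Fin.one_lt_of_ne hjq
  rw [integral_comp_apply_apply hjq (fun a b => F a * H b), sum_mul_sum, ← sum_product']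
  gcongr
  · exact fun p _ _ => mul_nonneg (hF _) (hH _)
  · exact fun p _ => by simp

theorem integral_weight_sq_mul_rho_self_pow (j : Fin r) (k : ℕ) :
    ∫ g, (((r : ℝ) ^ 2 - 1) - 12 * rho1 r j g ^ 2) ^ 2 * rho1 r j g ^ k ∂permMeasure r
      = (∑ i : Fin r, (((r : ℝ) ^ 2 - 1) - 12 * centered r i ^ 2) ^ 2 * centered r i ^ k)
        / (r : ℝ) :=
  integral_comp_apply j fun i =>
    (((r : ℝ) ^ 2 - 1) - 12 * centered r i ^ 2) ^ 2 * centered r i ^ k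

theorem integral_weight_sq_mul_rho_self_pow_four (j : Fin r) :
    ∫ g, (((r : ℝ) ^ 2 - 1) - 12 * rho1 r j g ^ 2) ^ 2 * rho1 r j g ^ 4 ∂permMeasure r
      = ((r : ℝ) ^ 2 - 1) * (r ^ 2 - 4) * (9 * r ^ 4 - 118 * r ^ 2 + 445) / 420 := by
  have hr : (r : ℝ) ≠ 0 := by exact_mod_cast j.pos.ne'
  rw [integral_weight_sq_mul_rho_self_pow, sum_weight_sq_mul_pow_four]
  field_simp

theorem integral_weight_sq_mul_rho_self_pow_eight (j : Fin r) :
    ∫ g, (((r : ℝ) ^ 2 - 1) - 12 * rho1 r j g ^ 2) ^ 2 * rho1 r j g ^ 8 ∂permMeasure r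
      = ((r : ℝ) ^ 2 - 1) * (r ^ 2 - 4) * (2905 * r ^ 8 - 86940 * r ^ 6 + 1201326 * r ^ 4
        - 8576812 * r ^ 2 + 24972225) / 2882880 := by
  have hr : (r : ℝ) ≠ 0 := by exact_mod_cast j.pos.ne'
  rw [integral_weight_sq_mul_rho_self_pow, sum_weight_sq_mul_pow_eight]
  field_simp

theorem integral_weight_sq_mul_rho_pow_four_le_of_ne {j q : Fin r} (hjq : j ≠ q) :
    ∫ g, (((r : ℝ) ^ 2 - 1) - 12 * rho1 r j g ^ 2) ^ 2 * rho1 r q g ^ 4 ∂permMeasure r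
      ≤ r * (r + 1) * ((r : ℝ) ^ 2 - 1) * (r ^ 2 - 4) * (3 * r ^ 2 - 7) / 300 := by
  have hr : (1 : ℝ) < r := by exact_mod_cast Fin.one_lt_of_ne hjq
  calc _ ≤ (∑ i : Fin r, (((r : ℝ) ^ 2 - 1) - 12 * centered r i ^ 2) ^ 2) * powerSum r 4
          / (r * (r - 1)) :=
        integral_mul_comp_apply_le hjq (fun _ => sq_nonneg _) (fun _ => by positivity)
    _ = _ := by
      rw [sum_weight_sq, powerSum_four]
      field_simp [show (r : ℝ) - 1 ≠ 0 by linarith]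
      ring

theorem integral_weight_sq_mul_rho_self_sq_mul_rho_sq_le_of_ne {j q : Fin r} (hjq : j ≠ q) :
    ∫ g, (((r : ℝ) ^ 2 - 1) - 12 * rho1 r j g ^ 2) ^ 2 * rho1 r j g ^ 2 * rho1 r q g ^ 2
        ∂permMeasure r
      ≤ r * (r + 1) * ((r : ℝ) ^ 2 - 1) * (r ^ 2 - 4) * (11 * r ^ 2 - 71) / 1260 := by
  have hr : (1 : ℝ) < r := by exact_mod_cast Fin.one_lt_of_ne hjq
  calc _ ≤ (∑ i : Fin r, (((r : ℝ) ^ 2 - 1) - 12 * centered r i ^ 2) ^ 2 * centered r i ^ 2)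
          * powerSum r 2 / (r * (r - 1)) :=
        integral_mul_comp_apply_le hjq (fun _ => by positivity) (fun _ => by positivity)
    _ = _ := by
      rw [sum_weight_sq_mul_sq, powerSum_two]
      field_simp [show (r : ℝ) - 1 ≠ 0 by linarith]
      ring

theorem integral_weight_sq_mul_rho_self_pow_four_mul_rho_pow_four_le_of_ne {j t : Fin r}
    (hjt : j ≠ t) :
    ∫ g, (((r : ℝ) ^ 2 - 1) - 12 * rho1 r j g ^ 2) ^ 2 * rho1 r j g ^ 4 * rho1 r t g ^ 4
        ∂permMeasure r
      ≤ r * (r + 1) * ((r : ℝ) ^ 2 - 1) * (r ^ 2 - 4) * (9 * r ^ 4 - 118 * r ^ 2 + 445)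
        * (3 * r ^ 2 - 7) / 100800 := by
  have hr : (1 : ℝ) < r := by exact_mod_cast Fin.one_lt_of_ne hjt
  calc _ ≤ (∑ i : Fin r, (((r : ℝ) ^ 2 - 1) - 12 * centered r i ^ 2) ^ 2 * centered r i ^ 4)
          * powerSum r 4 / (r * (r - 1)) :=
        integral_mul_comp_apply_le hjt (fun _ => by positivity) (fun _ => by positivity)
    _ = _ := by
      rw [sum_weight_sq_mul_pow_four, powerSum_four]
      field_simp [show (r : ℝ) - 1 ≠ 0 by linarith]
      ring

-- After substituting `r = y + 2`, each polynomial inequality below has only nonnegative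
-- coefficients in `y`, so `ring_nf; positivity` proves it.
theorem exists_cast_eq_add_two (hr : 2 ≤ r) : ∃ y : ℝ, 0 ≤ y ∧ (r : ℝ) = y + 2 :=
  ⟨r - 2, by rw [sub_nonneg]; exact_mod_cast hr, by ring⟩

theorem integral_weight_sq_mul_rho_self_pow_four_le (hr : 2 ≤ r) (j : Fin r) :
    ∫ g, (((r : ℝ) ^ 2 - 1) - 12 * rho1 r j g ^ 2) ^ 2 * rho1 r j g ^ 4 ∂permMeasure r
      ≤ 3 * (r : ℝ) ^ 8 / 140 := by
  obtain ⟨y, hy, hry⟩ := exists_cast_eq_add_two hr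
  rw [integral_weight_sq_mul_rho_self_pow_four, hry, ← sub_nonneg]
  ring_nf; positivity

theorem integral_weight_sq_mul_rho_pow_four_le (hr : 2 ≤ r) (j q : Fin r) :
    ∫ g, (((r : ℝ) ^ 2 - 1) - 12 * rho1 r j g ^ 2) ^ 2 * rho1 r q g ^ 4 ∂permMeasure r
      ≤ 0.02440 * (r : ℝ) ^ 8 := by
  rcases eq_or_ne j q with rfl | hjq
  · refine (integral_weight_sq_mul_rho_self_pow_four_le hr j).trans ?_
    nlinarith [pow_nonneg (Nat.cast_nonneg (α := ℝ) r) 8]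
  · obtain ⟨y, hy, hry⟩ := exists_cast_eq_add_two hr
    refine (integral_weight_sq_mul_rho_pow_four_le_of_ne hjq).trans ?_
    rw [hry, ← sub_nonneg]
    ring_nf; positivity

theorem integral_weight_sq_mul_rho_self_sq_mul_rho_sq_le (hr : 2 ≤ r) (j q : Fin r) :
    ∫ g, (((r : ℝ) ^ 2 - 1) - 12 * rho1 r j g ^ 2) ^ 2 * rho1 r j g ^ 2 * rho1 r q g ^ 2
        ∂permMeasure r ≤ 0.02292 * (r : ℝ) ^ 8 := by
  rcases eq_or_ne j q with rfl | hjq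
  · simp only [mul_assoc, ← pow_add]
    refine (integral_weight_sq_mul_rho_self_pow_four_le hr j).trans ?_
    nlinarith [pow_nonneg (Nat.cast_nonneg (α := ℝ) r) 8]
  · obtain ⟨y, hy, hry⟩ := exists_cast_eq_add_two hr
    refine (integral_weight_sq_mul_rho_self_sq_mul_rho_sq_le_of_ne hjq).trans ?_
    rw [hry, ← sub_nonneg]
    ring_nf; positivity

theorem integral_weight_sq_mul_rho_pow_four_mul_rho_pow_four_le (hr : 2 ≤ r)
    (j q t : Fin r) :
    ∫ g, (((r : ℝ) ^ 2 - 1) - 12 * rho1 r j g ^ 2) ^ 2 * rho1 r q g ^ 4 * rho1 r t g ^ 4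
        ∂permMeasure r ≤ 0.00111 * (r : ℝ) ^ 12 := by
  obtain ⟨y, hy, hry⟩ := exists_cast_eq_add_two hr
  rcases eq_or_ne j q with rfl | hjq
  · rcases eq_or_ne j t with rfl | hjt
    · simp only [mul_assoc, ← pow_add]
      rw [integral_weight_sq_mul_rho_self_pow_eight, hry, ← sub_nonneg]
      ring_nf; positivity
    · refine (integral_weight_sq_mul_rho_self_pow_four_mul_rho_pow_four_le_of_ne hjt).trans ?_
      rw [hry, ← sub_nonneg]
      ring_nf; positivity
  calc _ ≤ ∫ g, (((r : ℝ) ^ 2 - 1) - 12 * rho1 r j g ^ 2) ^ 2 * rho1 r q g ^ 4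
          * (((r : ℝ) - 1) / 2) ^ 4 ∂permMeasure r :=
        integral_mono (.of_finite) (.of_finite) fun g =>
          mul_le_mul_of_nonneg_left (centered_pow_four_le _) (by positivity)
    _ = (∫ g, (((r : ℝ) ^ 2 - 1) - 12 * rho1 r j g ^ 2) ^ 2 * rho1 r q g ^ 4 ∂permMeasure r)
          * (((r : ℝ) - 1) / 2) ^ 4 := integral_mul_const _ _
    _ ≤ r * (r + 1) * ((r : ℝ) ^ 2 - 1) * (r ^ 2 - 4) * (3 * r ^ 2 - 7) / 300
          * (((r : ℝ) - 1) / 2) ^ 4 := by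
        gcongr; exact integral_weight_sq_mul_rho_pow_four_le_of_ne hjq
    _ ≤ 0.00111 * (r : ℝ) ^ 12 := by
        rw [hry, ← sub_nonneg]
        ring_nf; positivity

end Integrals

/-- **Lemma 3.7 (Gaunt–Reinert).** For `r ≥ 2` and all `j, q, t ∈ {1, …, r}`:
`E[((r²−1) − 12ρ(j)²)² ρ(j)⁴] ≤ 3r⁸/140`, `E[((r²−1) − 12ρ(j)²)² ρ(q)⁴] ≤ 0.02440 r⁸`,
`E[((r²−1) − 12ρ(j)²)² ρ(j)²ρ(q)²] ≤ 0.02292 r⁸` and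
`E[((r²−1) − 12ρ(j)²)² ρ(q)⁴ρ(t)⁴] ≤ 0.00111 r¹²`. -/
theorem rho_quadratic_combination_bounds (r : ℕ) (hr : 2 ≤ r) (j q t : Fin r) :
    (∫ p, (((r : ℝ) ^ 2 - 1) - 12 * (rho1 r j p) ^ 2) ^ 2 * (rho1 r j p) ^ 4
        ∂(permMeasure r) ≤ 3 * (r : ℝ) ^ 8 / 140) ∧
    (∫ p, (((r : ℝ) ^ 2 - 1) - 12 * (rho1 r j p) ^ 2) ^ 2 * (rho1 r q p) ^ 4
        ∂(permMeasure r) ≤ 0.02440 * (r : ℝ) ^ 8) ∧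
    (∫ p, (((r : ℝ) ^ 2 - 1) - 12 * (rho1 r j p) ^ 2) ^ 2
        * (rho1 r j p) ^ 2 * (rho1 r q p) ^ 2 ∂(permMeasure r)
      ≤ 0.02292 * (r : ℝ) ^ 8) ∧
    ∫ p, (((r : ℝ) ^ 2 - 1) - 12 * (rho1 r j p) ^ 2) ^ 2
        * (rho1 r q p) ^ 4 * (rho1 r t p) ^ 4 ∂(permMeasure r)
      ≤ 0.00111 * (r : ℝ) ^ 12 :=
  ⟨integral_weight_sq_mul_rho_self_pow_four_le hr j,
    integral_weight_sq_mul_rho_pow_four_le hr j q,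
    integral_weight_sq_mul_rho_self_sq_mul_rho_sq_le hr j q,
    integral_weight_sq_mul_rho_pow_four_mul_rho_pow_four_le hr j q t⟩
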